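/- Let F, G : ℝ → ℝ satisfy 0 < F(w) ≤ F_max and F(w)² − G(w)² ≥ 0 pointwise. For any vectors A, W ∈ ℝ^D: −‖A ⊙ √(F(W))‖² + ‖|A| ⊙ (G(W)/√(F(W)))‖² ≤ −(1/F_max) Σ_{d=1}^D A_d² (F(W_d)² − G(W_d)²), where F(W), G(W) denote component-wise application and ⊙ element-wise product. -/
import Mathlib


theorem stmt10 {ι : Type*} [Fintype ι] (F G : ℝ → ℝ) (Fmax : ℝ) (hFmax : 0 < Fmax)
    (hF : ∀ w, 0 < F w ∧ F w ≤ Fmax) (hFG : ∀ w, 0 ≤ F w ^ 2 - G w ^ 2)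
    (A W : ι → ℝ) :
    -(∑ i, (A i * Real.sqrt (F (W i))) ^ 2)
        + ∑ i, (|A i| * (G (W i) / Real.sqrt (F (W i)))) ^ 2
      ≤ -(1 / Fmax) * ∑ i, A i ^ 2 * (F (W i) ^ 2 - G (W i) ^ 2) := by
  rw [neg_add_eq_sub, ← Finset.sum_sub_distrib, neg_mul, Finset.mul_sum, ← Finset.sum_neg_distrib]
  apply Finset.sum_le_sum
  intro i _
  obtain ⟨hFpos, hFle⟩ := hF (W i)
  have hs : Real.sqrt (F (W i)) ^ 2 = F (W i) := Real.sq_sqrt hFpos.le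
  have h1 : (|A i| * (G (W i) / Real.sqrt (F (W i)))) ^ 2
      - (A i * Real.sqrt (F (W i))) ^ 2
      = -(A i ^ 2 * (F (W i) ^ 2 - G (W i) ^ 2) / F (W i)) := by
    rw [mul_pow, mul_pow, sq_abs, div_pow, hs]
    field_simp
    ring
  have h2 : A i ^ 2 * (F (W i) ^ 2 - G (W i) ^ 2) / Fmax
      ≤ A i ^ 2 * (F (W i) ^ 2 - G (W i) ^ 2) / F (W i) := by
    exact div_le_div_of_nonneg_left (mul_nonneg (sq_nonneg _) (hFG _)) hFpos hFle
  rw [h1, one_div]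
  rw [div_eq_inv_mul (A i ^ 2 * (F (W i) ^ 2 - G (W i) ^ 2)) Fmax] at h2
  linarith [h2]
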